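/- Let v_0, v_1, …, v_k ∈ H be pairwise ω-orthogonal vectors, each with a_1-coordinate equal to 1. Let S = {y ∈ H₂ : m·y ∈ span_ℤ(pr₂(v_0),…,pr₂(v_k)) for some nonzero integer m} be the smallest direct summand of H₂ containing the projections pr₂(v_i), let (s_1,…,s_r) be a ℤ-basis of S, and let D ⊆ H₂ be an isotropic direct summand of rank r with a basis u_1, …, u_r satisfying ω(s_i, u_j) = δ_{ij}. Let t be the b_1-coordinate of v_0. Then there exists u ∈ D such that ω(a_1 + t·b_1 + u, v_j) = 0 for all j = 0, …, k. -/

import Mathlib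

namespace Paper

/-- The standard symplectic form on `R^{2g}` with respect to the basis
`a_1, b_1, …, a_g, b_g` (coordinates `2i, 2i+1` for `a_{i+1}, b_{i+1}`). -/
def symp {R : Type*} [CommRing R] {g : ℕ} (x y : Fin (2 * g) → R) : R :=
  ∑ i : Fin g,
    (x ⟨2 * i.1, by omega⟩ * y ⟨2 * i.1 + 1, by omega⟩ -
      x ⟨2 * i.1 + 1, by omega⟩ * y ⟨2 * i.1, by omega⟩)

theorem symp_add_left {R : Type*} [CommRing R] {g : ℕ} (x y a : Fin (2 * g) → R) :
    symp (x + y) a = symp x a + symp y a := by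
  unfold symp
  rw [← Finset.sum_add_distrib]
  exact Finset.sum_congr rfl fun i _ => by simp only [Pi.add_apply]; ring

theorem symp_smul_left {R : Type*} [CommRing R] {g : ℕ} (c : R) (x a : Fin (2 * g) → R) :
    symp (c • x) a = c * symp x a := by
  unfold symp
  rw [Finset.mul_sum]
  exact Finset.sum_congr rfl fun i _ => by simp only [Pi.smul_apply, smul_eq_mul]; ring

theorem symp_zero_left {R : Type*} [CommRing R] {g : ℕ} (a : Fin (2 * g) → R) :
    symp (0 : Fin (2 * g) → R) a = 0 := by
  unfold symp; simp

/-- The orthogonal complement `A^⊥ = {x | ω(x,a) = 0 for all a ∈ A}`. -/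
def perp {R : Type*} [CommRing R] {g : ℕ} (A : Set (Fin (2 * g) → R)) :
    Submodule R (Fin (2 * g) → R) where
  carrier := {x | ∀ a ∈ A, symp x a = 0}
  add_mem' := by
    intro x y hx hy a ha
    rw [symp_add_left, hx a ha, hy a ha, add_zero]
  zero_mem' := by
    intro a ha
    exact symp_zero_left a
  smul_mem' := by
    intro c x hx a ha
    rw [symp_smul_left, hx a ha, mul_zero]

/-- The submodule of vectors whose first `m` coordinates vanish.
`H_k = coordZero R (2*g) (2*(k-1))`, and `H₂ = coordZero R (2*(g+1)) 2`. -/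
def coordZero (R : Type*) [CommRing R] (n m : ℕ) : Submodule R (Fin n → R) where
  carrier := {v | ∀ j : Fin n, (j : ℕ) < m → v j = 0}
  add_mem' := by
    intro x y hx hy j hj
    have h1 := hx j hj
    have h2 := hy j hj
    simp [Pi.add_apply, h1, h2]
  zero_mem' := by intro j hj; rfl
  smul_mem' := by
    intro c x hx j hj
    have h1 := hx j hj
    simp [Pi.smul_apply, h1]

/-- The standard basis vector `a_{i+1}` (`i` is 0-indexed). -/
def stdA (R : Type*) [CommRing R] (g i : ℕ) : Fin (2 * g) → R :=
  fun j => if (j : ℕ) = 2 * i then 1 else 0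

/-- The standard basis vector `b_{i+1}` (`i` is 0-indexed). -/
def stdB (R : Type*) [CommRing R] (g i : ℕ) : Fin (2 * g) → R :=
  fun j => if (j : ℕ) = 2 * i + 1 then 1 else 0

/-- Regard an integer vector as a rational vector. -/
def qcast {n : ℕ} (v : Fin n → ℤ) : Fin n → ℚ := fun j => (v j : ℚ)

/-- The projection `pr₂` deleting the `a_1`- and `b_1`-coordinates. -/
def pr2 {R : Type*} [CommRing R] {n : ℕ} (v : Fin n → R) : Fin n → R :=
  fun j => if (j : ℕ) < 2 then 0 else v j

/-- `gcd(v_1, …, v_m) = 1`: the vectors are linearly independent and their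
ℤ-span is a direct summand. -/
def IsUnimodular {n m : ℕ} (v : Fin m → Fin n → ℤ) : Prop :=
  LinearIndependent ℤ v ∧
    ∃ C : Submodule ℤ (Fin n → ℤ), IsCompl (Submodule.span ℤ (Set.range v)) C

/-- A primitive vector. -/
def Primitive {n : ℕ} (v : Fin n → ℤ) : Prop := IsUnimodular ![v]

/-- The entries of `w` are pairwise `ω`-orthogonal. -/
def PairwiseOrth {g m : ℕ} (w : Fin m → Fin (2 * g) → ℤ) : Prop :=
  ∀ i j, i ≠ j → symp (w i) (w j) = 0

/-- `Λ³ W`: the span of all wedges of three vectors from `W` inside the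
exterior algebra. -/
def wedge3 {g : ℕ} (W : Submodule ℚ (Fin (2 * g) → ℚ)) :
    Submodule ℚ (ExteriorAlgebra ℚ (Fin (2 * g) → ℚ)) :=
  Submodule.span ℚ {x | ∃ z₁ ∈ W, ∃ z₂ ∈ W, ∃ z₃ ∈ W,
    x = ExteriorAlgebra.ι ℚ z₁ * ExteriorAlgebra.ι ℚ z₂ * ExteriorAlgebra.ι ℚ z₃}

/-- `u ∧ Λ² W`. -/
def uWedge2 {g : ℕ} (u : Fin (2 * g) → ℚ) (W : Submodule ℚ (Fin (2 * g) → ℚ)) :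
    Submodule ℚ (ExteriorAlgebra ℚ (Fin (2 * g) → ℚ)) :=
  Submodule.span ℚ {x | ∃ z₁ ∈ W, ∃ z₂ ∈ W,
    x = ExteriorAlgebra.ι ℚ u * ExteriorAlgebra.ι ℚ z₁ * ExteriorAlgebra.ι ℚ z₂}

/-- `u ∧ u' ∧ W`. -/
def uuWedge1 {g : ℕ} (u u' : Fin (2 * g) → ℚ) (W : Submodule ℚ (Fin (2 * g) → ℚ)) :
    Submodule ℚ (ExteriorAlgebra ℚ (Fin (2 * g) → ℚ)) :=
  Submodule.span ℚ {x | ∃ z ∈ W,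
    x = ExteriorAlgebra.ι ℚ u * ExteriorAlgebra.ι ℚ u' * ExteriorAlgebra.ι ℚ z}

/-- The simplicial differential: on the summand indexed by `w` it sends `z` to
`Σ_j (-1)^j · z` placed in the summand indexed by `∂_j w`. -/
noncomputable def diff (g p : ℕ)
    (ξ : (Fin (p + 1) → Fin (2 * g) → ℤ) →₀ ExteriorAlgebra ℚ (Fin (2 * g) → ℚ)) :
    (Fin p → Fin (2 * g) → ℤ) →₀ ExteriorAlgebra ℚ (Fin (2 * g) → ℚ) :=
  ξ.sum fun w z =>
    ∑ j : Fin (p + 1), ((-1 : ℚ) ^ (j : ℕ)) • Finsupp.single (fun i => w (j.succAbove i)) z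

/-- The gcd of the determinants of all maximal square submatrices of the matrix
whose columns are the `v i`. -/
def vgcd {ι : Type*} [Fintype ι] {m : ℕ} (v : Fin m → ι → ℤ) : ℕ :=
  Finset.univ.gcd fun r : Fin m → ι => (Matrix.det (Matrix.of fun i j => v j (r i))).natAbs

/-!
Write `t` for the `b₁`-coordinate of `v₀`. Pairing `a₁ + t b₁` with `v_j` gives `v_j(b₁) - t`.
Splitting `ω(v₀, v_j) = 0` into its `(a₁, b₁)`-part and its `H₂`-part shows that
`ω(pr₂ v₀, pr₂ v_j) = t - v_j(b₁)`, so it suffices to find `u ∈ D` with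
`ω(u, v_j) = ω(pr₂ v₀, pr₂ v_j)`. Since `u ∈ H₂`, only `pr₂ v_j ∈ S` matters, and the duality
between `(s_i)` and `(u_j)` provides `u = ∑ ω(s_l, pr₂ v₀) u_l`, which pairs with `S` exactly
as `pr₂ v₀` does.
-/

section Symp

variable {R : Type*} [CommRing R] {g : ℕ}

theorem symp_swap (x y : Fin (2 * g) → R) : symp y x = -symp x y := by
  unfold symp
  rw [← Finset.sum_neg_distrib]
  exact Finset.sum_congr rfl fun i _ => by ring

theorem symp_self (x : Fin (2 * g) → R) : symp x x = 0 := by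
  unfold symp
  exact Finset.sum_eq_zero fun i _ => by ring

theorem symp_smul_right (c : R) (x y : Fin (2 * g) → R) :
    symp x (c • y) = c * symp x y := by
  rw [symp_swap, symp_smul_left, symp_swap y]; ring

theorem symp_sum_right {ι : Type*} (x : Fin (2 * g) → R) (t : Finset ι)
    (f : ι → Fin (2 * g) → R) : symp x (∑ i ∈ t, f i) = ∑ i ∈ t, symp x (f i) := by
  unfold symp
  simp only [Finset.sum_apply, Finset.mul_sum, ← Finset.sum_sub_distrib]
  exact Finset.sum_comm

theorem symp_eq_add_symp_pr2 (x y : Fin (2 * (g + 1)) → R) :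
    symp x y = x ⟨0, Nat.succ_pos _⟩ * y ⟨1, Nat.one_lt_succ_succ _⟩ -
      x ⟨1, Nat.one_lt_succ_succ _⟩ * y ⟨0, Nat.succ_pos _⟩ + symp (pr2 x) (pr2 y) := by
  unfold symp pr2
  rw [Fin.sum_univ_succ, Fin.sum_univ_succ]
  have hge : ∀ i : ℕ, ¬2 * (i + 1) ≤ 1 := by omega
  simp [hge]

theorem pr2_mem_coordZero (x : Fin (2 * (g + 1)) → R) : pr2 x ∈ coordZero R (2 * (g + 1)) 2 :=
  fun _ hj => if_pos hj

theorem pr2_eq_self_of_mem_coordZero {x : Fin (2 * (g + 1)) → R}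
    (hx : x ∈ coordZero R (2 * (g + 1)) 2) : pr2 x = x := by
  funext j
  by_cases hj : (j : ℕ) < 2
  · exact (if_pos hj).trans (hx j hj).symm
  · exact if_neg hj

theorem symp_pr2_right_of_mem_coordZero {x : Fin (2 * (g + 1)) → R}
    (hx : x ∈ coordZero R (2 * (g + 1)) 2) (y : Fin (2 * (g + 1)) → R) :
    symp x (pr2 y) = symp x y := by
  rw [symp_eq_add_symp_pr2 x y, hx _ (by norm_num), hx _ (by norm_num),
    pr2_eq_self_of_mem_coordZero hx]
  ring

theorem symp_stdA_zero_left (y : Fin (2 * (g + 1)) → R) :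
    symp (stdA R (g + 1) 0) y = y ⟨1, Nat.one_lt_succ_succ _⟩ := by
  have hpr2 : pr2 (stdA R (g + 1) 0) = 0 := by
    funext j
    simp only [pr2, stdA, Pi.zero_apply]
    split_ifs <;> first | rfl | omega
  rw [symp_eq_add_symp_pr2, hpr2, symp_zero_left]
  simp [stdA]

theorem symp_stdB_zero_left (y : Fin (2 * (g + 1)) → R) :
    symp (stdB R (g + 1) 0) y = -y ⟨0, Nat.succ_pos _⟩ := by
  have hpr2 : pr2 (stdB R (g + 1) 0) = 0 := by
    funext j
    simp only [pr2, stdB, Pi.zero_apply]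
    split_ifs <;> first | rfl | omega
  rw [symp_eq_add_symp_pr2, hpr2, symp_zero_left]
  simp [stdB]

end Symp

theorem exists_mem_span_symp_eq_of_dual {R : Type*} [CommRing R] {g r : ℕ}
    {s u : Fin r → Fin (2 * g) → R}
    (hdual : ∀ i j, symp (s i) (u j) = if i = j then 1 else 0) (w : Fin (2 * g) → R) :
    ∃ d ∈ Submodule.span R (Set.range u),
      ∀ y ∈ Submodule.span R (Set.range s), symp y d = symp y w := by
  refine ⟨∑ l, symp (s l) w • u l,
    Submodule.sum_mem _ fun l _ => Submodule.smul_mem _ _ (Submodule.subset_span ⟨l, rfl⟩),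
    fun y hy => ?_⟩
  induction hy using Submodule.span_induction with
  | mem _ hy =>
    obtain ⟨i, rfl⟩ := hy
    simp [symp_sum_right, symp_smul_right, hdual]
  | zero => simp only [symp_zero_left]
  | add _ _ _ _ hx hy => rw [symp_add_left, symp_add_left, hx, hy]
  | smul c _ _ hx => rw [symp_smul_left, symp_smul_left, hx]

/-- Lemma 2.23, second case — compensating vector `u ∈ D` for the
dual of the smallest summand containing the projections. -/
theorem stmt10 (g k r : ℕ) (v : Fin (k + 1) → Fin (2 * (g + 1)) → ℤ)
    (horth : ∀ i j, i ≠ j → symp (v i) (v j) = 0)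
    (ha1 : ∀ i, v i ⟨0, by omega⟩ = 1)
    (s : Fin r → Fin (2 * (g + 1)) → ℤ)
    (hsS : ∀ y : Fin (2 * (g + 1)) → ℤ,
      (y ∈ coordZero ℤ (2 * (g + 1)) 2 ∧
        ∃ m : ℤ, m ≠ 0 ∧ m • y ∈ Submodule.span ℤ (Set.range fun i => pr2 (v i))) ↔
      y ∈ Submodule.span ℤ (Set.range s))
    (u : Fin r → Fin (2 * (g + 1)) → ℤ)
    (huH2 : ∀ j, u j ∈ coordZero ℤ (2 * (g + 1)) 2)
    (hdual : ∀ i j, symp (s i) (u j) = if i = j then 1 else 0) :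
    ∃ uu ∈ Submodule.span ℤ (Set.range u),
      ∀ j, symp (stdA ℤ (g + 1) 0 + (v 0 ⟨1, by omega⟩) • stdB ℤ (g + 1) 0 + uu) (v j) = 0 := by
  have hpr2S : ∀ j, pr2 (v j) ∈ Submodule.span ℤ (Set.range s) := fun j =>
    (hsS _).1 ⟨pr2_mem_coordZero _, 1, one_ne_zero,
      (one_smul ℤ (pr2 (v j))).symm ▸ Submodule.subset_span ⟨j, rfl⟩⟩
  obtain ⟨d, hdD, hd⟩ := exists_mem_span_symp_eq_of_dual hdual (pr2 (v 0))
  have hdH2 : d ∈ coordZero ℤ (2 * (g + 1)) 2 :=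
    Submodule.span_le.2 (Set.range_subset_iff.2 huH2) hdD
  refine ⟨d, hdD, fun j => ?_⟩
  have hv0 : symp (v 0) (v j) = 0 := by
    rcases eq_or_ne 0 j with rfl | h0j
    · exact symp_self _
    · exact horth 0 j h0j
  have hdv : symp d (v j) = symp (pr2 (v 0)) (pr2 (v j)) := by
    rw [← symp_pr2_right_of_mem_coordZero hdH2, symp_swap, hd _ (hpr2S j), ← symp_swap]
  rw [symp_eq_add_symp_pr2, ha1 0, ha1 j] at hv0
  rw [symp_add_left, symp_add_left, symp_smul_left, symp_stdA_zero_left, symp_stdB_zero_left,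
    ha1 j, hdv]
  linear_combination hv0

end Paper
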